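/- For all γ₁, γ₂ ≥ 0 and γ₃ ∈ [0,1) with γ₁ − γ₂ + 2γ₃ > 0, there exists a constant C > 0, independent of N, s, t and u, such that for every integer N ≥ 2, all s, t > 0 and every u ∈ ℝ^N: ‖(−A_N)^{γ₁} · exp(−A_N² t) · (I − exp(−A_N² s)) · u‖_{l²_N} ≤ C ( t^{−(γ₁−γ₂+2γ₃)/2} s^{γ₃} e^{−λ_{N,1}² t/2} ‖(−A_N)^{γ₂} u‖_{l²_N} + g(γ₁) |⟨u, φ_{N,0}⟩_{l²_N}| ), where g(0) := 1 and g(x) := 0 for x > 0. -/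

import Mathlib

open Real Matrix

/-- `g(0) = 1` and `g(x) = 0` for `x > 0`. -/
noncomputable def gfun : ℝ → ℝ := fun x => if x = 0 then 1 else 0

/-- The finite-difference Neumann Laplacian `A_N = (N²/π²)·T_N`, where `T_N` is tridiagonal
with diagonal `(-1, -2, …, -2, -1)` and off-diagonal entries `1`. -/
noncomputable def matA (N : ℕ) : Matrix (Fin N) (Fin N) ℝ :=
  Matrix.of fun i j =>
    ((N : ℝ) ^ 2 / Real.pi ^ 2) *
      (if (i : ℕ) = (j : ℕ) then (if (i : ℕ) = 0 ∨ (i : ℕ) = N - 1 then -1 else -2)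
       else if (i : ℕ) + 1 = (j : ℕ) ∨ (j : ℕ) + 1 = (i : ℕ) then 1 else 0)

/-- The eigenvalues `λ_{N,j} = (4N²/π²)·sin²(jπ/(2N))` of `-A_N`. -/
noncomputable def lamN (N j : ℕ) : ℝ :=
  4 * (N : ℝ) ^ 2 / Real.pi ^ 2 * Real.sin ((j : ℝ) * Real.pi / (2 * N)) ^ 2

/-- The discrete `l²_N`-norm `‖u‖ = ((1/N) Σ u_i²)^{1/2}`. -/
noncomputable def lN2norm (N : ℕ) (u : Fin N → ℝ) : ℝ :=
  Real.sqrt ((1 / (N : ℝ)) * ∑ i, (u i) ^ 2)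

lemma matA_entry (N : ℕ) (i k : Fin N) :
    (-(matA N)) i k = ((N : ℝ) ^ 2 / Real.pi ^ 2) *
      ((if (k:ℕ) = (i:ℕ) then (2:ℝ) else 0) - (if (k:ℕ) = (i:ℕ) + 1 then 1 else 0)
        - (if (k:ℕ) + 1 = (i:ℕ) then 1 else 0)
        - (if (i:ℕ) = 0 ∨ (i:ℕ) = N - 1 then (if (k:ℕ) = (i:ℕ) then 1 else 0) else 0)) := by
  simp only [Matrix.neg_apply, matA, Matrix.of_apply]
  split_ifs <;> first | ring1 | (exfalso; omega)

noncomputable def evec (N j : ℕ) : Fin N → ℝ :=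
  fun i => Real.cos ((j : ℝ) * Real.pi / N * ((i : ℕ) : ℝ) + (j : ℝ) * Real.pi / (2 * N))

lemma sum_row (N i : ℕ) (hi : i < N) (w : ℕ → ℝ) :
    ∑ k ∈ Finset.range N,
      ((if k = i then (2:ℝ) else 0) - (if k = i + 1 then 1 else 0) - (if k + 1 = i then 1 else 0)
        - (if i = 0 ∨ i = N - 1 then (if k = i then 1 else 0) else 0)) * w k
    = 2 * w i - (if i + 1 < N then w (i + 1) else 0) - (if 0 < i then w (i - 1) else 0)
        - (if i = 0 ∨ i = N - 1 then w i else 0) := by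
  simp only [sub_mul, ite_mul, one_mul, zero_mul, Finset.sum_sub_distrib]
  have h2 : ∀ (a : ℕ) (c : ℝ), (∑ k ∈ Finset.range N, if k = a then c * w k else 0)
      = if a < N then c * w a else 0 := by
    intro a c
    rw [Finset.sum_ite_eq' (Finset.range N) a (fun k => c * w k)]
    simp [Finset.mem_range]
  have h1 : ∀ (a : ℕ), (∑ k ∈ Finset.range N, if k = a then w k else 0)
      = if a < N then w a else 0 := by
    intro a
    rw [Finset.sum_ite_eq' (Finset.range N) a w]
    simp [Finset.mem_range]
  rw [h2 i 2, h1 (i+1)]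
  have h3 : (∑ k ∈ Finset.range N, if k + 1 = i then w k else 0)
      = if 0 < i then w (i-1) else 0 := by
    rcases Nat.eq_zero_or_pos i with h | h
    · subst h; simp
    · obtain ⟨i', rfl⟩ : ∃ i', i = i' + 1 := ⟨i - 1, by omega⟩
      have : ∀ k, (if k + 1 = i' + 1 then w k else 0) = (if k = i' then w k else 0) := by
        intro k; simp [Nat.add_right_cancel_iff]
      simp_rw [this]
      rw [h1 i']
      simp only [if_pos h]
      have : i' < N := by omega
      simp [this]
  rw [h3]
  have h4 : (∑ k ∈ Finset.range N, if i = 0 ∨ i = N - 1 then (if k = i then w k else 0) else 0)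
      = if i = 0 ∨ i = N - 1 then w i else 0 := by
    by_cases h : i = 0 ∨ i = N - 1
    · simp only [if_pos h]; rw [h1 i]; simp [hi]
    · simp [h]
  rw [h4, if_pos hi]

lemma cos_identity (θ A : ℝ) : Real.cos (A - θ) + Real.cos (A + θ) = 2 * Real.cos θ * Real.cos A := by
  rw [Real.cos_sub, Real.cos_add]; ring

lemma matA_mulVec_evec {N : ℕ} (hN : 2 ≤ N) {j : ℕ} (hj : j < N) :
    (-(matA N)) *ᵥ evec N j = lamN N j • evec N j := by
  have hNR : (0:ℝ) < N := by positivity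
  set θ : ℝ := (j : ℝ) * Real.pi / N with hθ
  set w : ℕ → ℝ := fun k => Real.cos (θ * k + θ / 2) with hw
  have hwe : ∀ i : Fin N, evec N j i = w (i : ℕ) := by
    intro i
    simp only [evec, hw, hθ]
    congr 1
    field_simp
  -- key trig : for any real a, w-type recurrence
  have hrec : ∀ a : ℝ, Real.cos (θ * (a - 1) + θ/2) + Real.cos (θ * (a+1) + θ/2)
      = 2 * Real.cos θ * Real.cos (θ * a + θ/2) := by
    intro a
    have := cos_identity θ (θ * a + θ/2)
    rw [show θ * a + θ/2 - θ = θ * (a - 1) + θ/2 by ring,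
        show θ * a + θ/2 + θ = θ * (a+1) + θ/2 by ring] at this
    exact this
  have hcos2 : 2 - 2 * Real.cos θ = 4 * Real.sin (θ/2) ^ 2 := by
    have h1 := Real.cos_two_mul (θ/2)
    have h2 := Real.sin_sq_add_cos_sq (θ/2)
    rw [show 2 * (θ/2) = θ by ring] at h1
    nlinarith
  have hlam : lamN N j = ((N:ℝ)^2 / Real.pi^2) * (2 - 2 * Real.cos θ) := by
    rw [hcos2, lamN, hθ]
    have : (j:ℝ) * Real.pi / N / 2 = (j:ℝ) * Real.pi / (2 * N) := by ring
    rw [this]; ring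
  funext i
  have hlhs : ((-(matA N)) *ᵥ evec N j) i
      = ((N:ℝ)^2 / Real.pi^2) * (2 * w i - (if (i:ℕ) + 1 < N then w ((i:ℕ) + 1) else 0)
          - (if 0 < (i:ℕ) then w ((i:ℕ) - 1) else 0)
          - (if (i:ℕ) = 0 ∨ (i:ℕ) = N - 1 then w (i:ℕ) else 0)) := by
    rw [Matrix.mulVec]
    show (∑ k, (-(matA N)) i k * evec N j k) = _
    rw [← sum_row N i i.isLt w]
    rw [Finset.mul_sum]
    rw [← Fin.sum_univ_eq_sum_range (fun k =>
      ((N:ℝ)^2/Real.pi^2) * (((if k = (i:ℕ) then (2:ℝ) else 0) - (if k = (i:ℕ)+1 then 1 else 0)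
        - (if k+1 = (i:ℕ) then 1 else 0)
        - (if (i:ℕ) = 0 ∨ (i:ℕ) = N-1 then (if k = (i:ℕ) then 1 else 0) else 0)) * w k)) N]
    apply Finset.sum_congr rfl
    intro k _
    rw [matA_entry, hwe]
    ring
  rw [hlhs, Pi.smul_apply, hwe, smul_eq_mul, hlam]
  have main : 2 * w (i:ℕ) - (if (i:ℕ) + 1 < N then w ((i:ℕ) + 1) else 0)
      - (if 0 < (i:ℕ) then w ((i:ℕ) - 1) else 0)
      - (if (i:ℕ) = 0 ∨ (i:ℕ) = N - 1 then w (i:ℕ) else 0)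
      = (2 - 2 * Real.cos θ) * w (i:ℕ) := by
    rcases Nat.eq_zero_or_pos (i:ℕ) with h0 | hpos
    · -- i = 0 : boundary, i+1 < N, i ≠ N-1 impossible because cond is OR so still fires
      have hb : (i:ℕ) = 0 ∨ (i:ℕ) = N - 1 := Or.inl h0
      have h1N : (i:ℕ) + 1 < N := by omega
      rw [if_pos h1N, if_neg (by omega), if_pos hb, h0]
      have := hrec 0
      rw [show θ * (0 - 1) + θ/2 = -(θ * 0 + θ/2) by ring, Real.cos_neg] at this
      simp only [hw]
      push_cast
      nlinarith [this]
    · rcases eq_or_ne (i:ℕ) (N-1) with hend | hmid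
      · have hb : (i:ℕ) = 0 ∨ (i:ℕ) = N - 1 := Or.inr hend
        rw [if_neg (by omega), if_pos hpos, if_pos hb]
        -- w (N-2) + w N = 2 cos θ w (N-1), and w "N" = cos(θ N + θ/2) = cos(jπ + θ/2) = cos(jπ - θ/2) = w (N-1)
        have hNj : θ * ((i:ℕ):ℝ) = (j:ℝ) * Real.pi - θ * 1 := by
          rw [hθ, hend]
          push_cast [Nat.cast_sub (by omega : 1 ≤ N)]
          field_simp
        have hrec' := hrec ((i:ℕ):ℝ)
        have hsin : Real.sin ((j:ℝ) * Real.pi) = 0 := by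
          rw [Real.sin_nat_mul_pi]
        have hcN : Real.cos (θ * (((i:ℕ):ℝ) + 1) + θ/2) = Real.cos (θ * ((i:ℕ):ℝ) + θ/2) := by
          rw [show θ * (((i:ℕ):ℝ)+1) + θ/2 = (j:ℝ) * Real.pi + θ/2 by rw [mul_add, hNj]; ring,
              show θ * ((i:ℕ):ℝ) + θ/2 = (j:ℝ) * Real.pi - θ/2 by rw [hNj]; ring,
              Real.cos_add, Real.cos_sub, hsin]
          ring
        rw [hcN] at hrec'
        have hcast : ((((i:ℕ) - 1 : ℕ)):ℝ) = ((i:ℕ):ℝ) - 1 := by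
          push_cast [Nat.cast_sub (by omega : 1 ≤ (i:ℕ))]; ring
        simp only [hw, hcast]
        nlinarith [hrec']
      · have hb : ¬((i:ℕ) = 0 ∨ (i:ℕ) = N - 1) := by omega
        rw [if_pos (by omega), if_pos hpos, if_neg hb]
        have hrec' := hrec ((i:ℕ):ℝ)
        have hcast : ((((i:ℕ) - 1 : ℕ)):ℝ) = ((i:ℕ):ℝ) - 1 := by
          push_cast [Nat.cast_sub (by omega : 1 ≤ (i:ℕ))]; ring
        have hcast2 : ((((i:ℕ) + 1 : ℕ)):ℝ) = ((i:ℕ):ℝ) + 1 := by push_cast; ring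
        simp only [hw, hcast, hcast2]
        nlinarith [hrec']
  rw [main]
  ring

lemma sin_arg_mem {N j : ℕ} (hN : 2 ≤ N) (hj : j < N) :
    0 ≤ (j:ℝ) * Real.pi / (2*N) ∧ (j:ℝ) * Real.pi / (2*N) < Real.pi / 2 := by
  have hNR : (0:ℝ) < N := by positivity
  constructor
  · positivity
  · rw [div_lt_div_iff₀ (by positivity) (by norm_num)]
    have hjN : (j:ℝ) < N := by exact_mod_cast hj
    nlinarith [Real.pi_pos]

lemma lamN_strictMono {N : ℕ} (hN : 2 ≤ N) {j k : ℕ} (hjk : j < k) (hk : k < N) :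
    lamN N j < lamN N k := by
  have h1 := sin_arg_mem hN (lt_trans hjk hk)
  have h2 := sin_arg_mem hN hk
  have hNR : (0:ℝ) < N := by positivity
  have harg : (j:ℝ) * Real.pi / (2*N) < (k:ℝ) * Real.pi / (2*N) := by
    rw [div_lt_div_iff₀ (by positivity) (by positivity)]
    have : (j:ℝ) < k := by exact_mod_cast hjk
    have hp := Real.pi_pos
    nlinarith [mul_pos hp hNR]
  have hsinj : Real.sin ((j:ℝ) * Real.pi / (2*N)) < Real.sin ((k:ℝ) * Real.pi / (2*N)) := by
    apply Real.strictMonoOn_sin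
      (Set.mem_Icc.mpr ⟨by nlinarith [h1.1, h1.2, Real.pi_pos], by nlinarith [h1.1, h1.2, Real.pi_pos]⟩)
      (Set.mem_Icc.mpr ⟨by nlinarith [h2.1, h2.2, Real.pi_pos], by nlinarith [h2.1, h2.2, Real.pi_pos]⟩) harg
  have hsj : 0 ≤ Real.sin ((j:ℝ) * Real.pi / (2*N)) := by
    apply Real.sin_nonneg_of_nonneg_of_le_pi h1.1
    nlinarith [h1.2, Real.pi_pos]
  rw [lamN, lamN]
  have hsq : Real.sin ((j:ℝ) * Real.pi / (2*N)) ^ 2 < Real.sin ((k:ℝ) * Real.pi / (2*N)) ^ 2 := by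
    exact pow_lt_pow_left₀ hsinj hsj (by norm_num)
  have hc : (0:ℝ) < 4 * (N:ℝ)^2 / Real.pi^2 := by positivity
  calc 4 * (N:ℝ)^2 / Real.pi^2 * Real.sin ((j:ℝ) * Real.pi / (2*N)) ^ 2
      < 4 * (N:ℝ)^2 / Real.pi^2 * Real.sin ((k:ℝ) * Real.pi / (2*N)) ^ 2 := by
        exact mul_lt_mul_of_pos_left hsq hc
    _ = _ := rfl

lemma lamN_zero (N : ℕ) : lamN N 0 = 0 := by simp [lamN]

lemma lamN_one_pos {N : ℕ} (hN : 2 ≤ N) : 0 < lamN N 1 := by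
  have h := sin_arg_mem hN (by omega : 1 < N)
  have hs : 0 < Real.sin ((1:ℝ) * Real.pi / (2*N)) := by
    apply Real.sin_pos_of_pos_of_lt_pi
    · have : ((1:ℕ):ℝ) * Real.pi / (2*N) = (1:ℝ) * Real.pi / (2*N) := by norm_num
      have h1 : (0:ℝ) < N := by positivity
      positivity
    · calc (1:ℝ) * Real.pi / (2*N) < Real.pi / 2 := by
            have := h.2; norm_num at this ⊢; exact this
        _ < Real.pi := by linarith [Real.pi_pos]
  rw [lamN]
  have hN0 : (0:ℝ) < N := by positivity
  push_cast
  positivity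

lemma evec_ne_zero {N j : ℕ} (hN : 2 ≤ N) (hj : j < N) : evec N j ≠ 0 := by
  intro h
  have h0 := congrFun h ⟨0, by omega⟩
  have harg := sin_arg_mem hN hj
  simp only [evec, Pi.zero_apply] at h0
  rw [show ((((⟨0, by omega⟩ : Fin N) : ℕ)) : ℝ) = 0 by norm_num] at h0
  rw [mul_zero, zero_add] at h0
  have : 0 < Real.cos ((j:ℝ) * Real.pi / (2*N)) := by
    apply Real.cos_pos_of_mem_Ioo
    constructor
    · linarith [harg.1, Real.pi_pos]
    · exact harg.2
  rw [h0] at this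
  exact lt_irrefl 0 this

lemma hasEigenvalue_of_basis {M : Type*} [AddCommGroup M] [Module ℝ M] (f : Module.End ℝ M)
    {ι : Type*} (b : Module.Basis ι ℝ M) (d : ι → ℝ)
    (h : ∀ i, f.HasEigenvector (d i) (b i)) {μ : ℝ} (hμ : f.HasEigenvalue μ) : ∃ i, d i = μ := by
  by_contra hc
  push_neg at hc
  have h_iSup : ⨆ ν ∈ Set.range d, Module.End.eigenspace f ν = ⊤ := by
    rw [eq_top_iff, ← b.span_eq, Submodule.span_le]
    rintro - ⟨i, rfl⟩
    simp only [SetLike.mem_coe]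
    apply Submodule.mem_iSup_of_mem (d i)
    apply Submodule.mem_iSup_of_mem ⟨i, rfl⟩
    exact (h i).1
  have hμ_not : μ ∉ Set.range d := by simpa using fun i => hc i
  have hdisj := Module.End.eigenspaces_iSupIndep f |>.disjoint_biSup hμ_not
  rw [h_iSup, disjoint_top] at hdisj
  exact hμ hdisj

lemma eigenvalue_mem {N : ℕ} (hN : 2 ≤ N) (hA : (-(matA N)).IsHermitian) (i : Fin N) :
    ∃ j : Fin N, hA.eigenvalues i = lamN N (j : ℕ) := by
  have hspec : hA.eigenvalues i ∈ spectrum ℝ (-(matA N)) := hA.eigenvalues_mem_spectrum_real i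
  rw [← AlgEquiv.spectrum_eq (Matrix.toLinAlgEquiv (Pi.basisFun ℝ (Fin N)))] at hspec
  have heig : Module.End.HasEigenvalue (Matrix.toLin' (-(matA N))) (hA.eigenvalues i) :=
    Module.End.hasEigenvalue_iff_mem_spectrum.mpr hspec
  have hev : ∀ j : Fin N, Module.End.HasEigenvector (Matrix.toLin' (-(matA N))) (lamN N (j:ℕ)) (evec N (j:ℕ)) := by
    intro j
    constructor
    · rw [Module.End.mem_eigenspace_iff, Matrix.toLin'_apply, matA_mulVec_evec hN j.isLt]
    · exact evec_ne_zero hN j.isLt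
  have hinj : Function.Injective (fun j : Fin N => lamN N (j:ℕ)) := by
    intro a b hab
    rcases lt_trichotomy (a:ℕ) (b:ℕ) with h | h | h
    · exact absurd hab (ne_of_lt (lamN_strictMono hN h b.isLt))
    · exact Fin.ext h
    · exact absurd hab.symm (ne_of_lt (lamN_strictMono hN h a.isLt))
  have hli : LinearIndependent ℝ (fun j : Fin N => evec N (j:ℕ)) :=
    Module.End.eigenvectors_linearIndependent' (Matrix.toLin' (-(matA N)))
      (fun j : Fin N => lamN N (j:ℕ)) hinj _ hev
  have hNe : Nonempty (Fin N) := ⟨⟨0, by omega⟩⟩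
  have hcard : Fintype.card (Fin N) = Module.finrank ℝ (Fin N → ℝ) := by
    simp [Module.finrank_pi]
  let b : Module.Basis (Fin N) ℝ (Fin N → ℝ) := basisOfLinearIndependentOfCardEqFinrank hli hcard
  have hb : ∀ j, b j = evec N (j:ℕ) := fun j => congrFun (coe_basisOfLinearIndependentOfCardEqFinrank hli hcard) j
  obtain ⟨j, hj⟩ := hasEigenvalue_of_basis (Matrix.toLin' (-(matA N))) b (fun j : Fin N => lamN N (j:ℕ))
    (fun j => by rw [hb]; exact hev j) heig
  exact ⟨j, hj.symm⟩

lemma one_sub_exp_le_rpow {γ : ℝ} (hγ0 : 0 ≤ γ) (hγ1 : γ ≤ 1) {y : ℝ} (hy : 0 ≤ y) :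
    1 - Real.exp (-y) ≤ y ^ γ := by
  rcases eq_or_lt_of_le hy with h | hy0
  · rw [← h]; simpa using Real.rpow_nonneg le_rfl γ
  rcases le_or_gt 1 y with h1 | h1
  · calc 1 - Real.exp (-y) ≤ 1 := by linarith [Real.exp_pos (-y)]
      _ ≤ y ^ γ := Real.one_le_rpow h1 hγ0
  · calc 1 - Real.exp (-y) ≤ y := by linarith [Real.add_one_le_exp (-y)]
      _ = y ^ (1:ℝ) := (Real.rpow_one y).symm
      _ ≤ y ^ γ := Real.rpow_le_rpow_of_exponent_ge hy0 h1.le hγ1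

/-- sup_{y ≥ 0} y^α e^{-y²/2} is bounded. -/
lemma rpow_mul_exp_neg_sq_le {α : ℝ} (hα : 0 ≤ α) :
    ∃ K : ℝ, 1 ≤ K ∧ ∀ y : ℝ, 0 ≤ y → y ^ α * Real.exp (-(y^2/2)) ≤ K := by
  obtain ⟨n, hn⟩ : ∃ n : ℕ, α ≤ 2 * n := ⟨⌈α⌉₊, by
    calc α ≤ ⌈α⌉₊ := Nat.le_ceil α
      _ ≤ 2 * (⌈α⌉₊ : ℝ) := by nlinarith [Nat.cast_nonneg (α := ℝ) ⌈α⌉₊]⟩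
  refine ⟨max 1 (2^n * n.factorial), le_max_left _ _, fun y hy => ?_⟩
  rcases le_or_gt y 1 with h1 | h1
  · have e1 : Real.exp (-(y^2/2)) ≤ 1 := by
      rw [Real.exp_le_one_iff]
      nlinarith [sq_nonneg y]
    have e2 : y ^ α ≤ 1 := Real.rpow_le_one hy h1 hα
    calc y ^ α * Real.exp (-(y^2/2)) ≤ 1 * 1 :=
          mul_le_mul e2 e1 (le_of_lt (Real.exp_pos _)) zero_le_one
      _ = 1 := by ring
      _ ≤ _ := le_max_left _ _
  · have hy2 : (y^2/2) ^ n / (n.factorial : ℝ) ≤ Real.exp (y^2/2) := by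
      calc (y^2/2) ^ n / (n.factorial : ℝ)
          ≤ ∑ i ∈ Finset.range (n+1), (y^2/2) ^ i / (i.factorial : ℝ) := by
            apply Finset.single_le_sum (f := fun i => (y^2/2) ^ i / (i.factorial : ℝ))
              (fun i _ => by positivity) (Finset.self_mem_range_succ n)
        _ ≤ Real.exp (y^2/2) := Real.sum_le_exp_of_nonneg (by positivity) (n+1)
    have hpow : y ^ α ≤ y ^ (2*n : ℕ) := by
      calc y ^ α ≤ y ^ ((2*n : ℕ) : ℝ) :=
          Real.rpow_le_rpow_of_exponent_le h1.le (by exact_mod_cast hn)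
        _ = y ^ (2*n : ℕ) := Real.rpow_natCast y (2*n)
    have hkey : y ^ (2*n : ℕ) ≤ 2^n * n.factorial * Real.exp (y^2/2) := by
      have h2 : y ^ (2*n : ℕ) = (y^2/2)^n * 2^n := by
        rw [div_pow, pow_mul]; field_simp
      rw [h2]
      rw [div_le_iff₀ (by positivity)] at hy2
      nlinarith [hy2, pow_pos (by positivity : (0:ℝ) < 2) n]
    calc y ^ α * Real.exp (-(y^2/2)) ≤ y ^ (2*n:ℕ) * Real.exp (-(y^2/2)) := by
          apply mul_le_mul_of_nonneg_right hpow (le_of_lt (Real.exp_pos _))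
      _ ≤ (2^n * n.factorial * Real.exp (y^2/2)) * Real.exp (-(y^2/2)) :=
          mul_le_mul_of_nonneg_right hkey (le_of_lt (Real.exp_pos _))
      _ = 2^n * n.factorial := by rw [mul_assoc, ← Real.exp_add]; simp
      _ ≤ _ := le_max_right _ _

lemma scalar_bound {γ₁ γ₂ γ₃ : ℝ} (hγ₁ : 0 ≤ γ₁) (hγ₂ : 0 ≤ γ₂) (hγ₃ : 0 ≤ γ₃) (hγ₃' : γ₃ ≤ 1)
    (hsum : 0 < γ₁ - γ₂ + 2 * γ₃) :
    ∃ C₀ : ℝ, 1 ≤ C₀ ∧ ∀ l x s t : ℝ, 0 < l → (x = 0 ∨ l ≤ x) → 0 < s → 0 < t →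
      (x ^ γ₁ * Real.exp (-t * x ^ 2)) * (1 - Real.exp (-s * x ^ 2)) ≤
        C₀ * (t ^ (-(γ₁ - γ₂ + 2 * γ₃) / 2) * s ^ γ₃ * Real.exp (-l ^ 2 * t / 2) * x ^ γ₂) := by
  set α : ℝ := γ₁ - γ₂ + 2 * γ₃ with hα
  obtain ⟨K, hK1, hK⟩ := rpow_mul_exp_neg_sq_le hsum.le
  refine ⟨K, hK1, fun l x s t hl hx hs ht => ?_⟩
  rcases hx with rfl | hlx
  · have : (1 : ℝ) - Real.exp (-s * 0 ^ 2) = 0 := by norm_num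
    rw [this, mul_zero]
    positivity
  · have hx0 : 0 < x := lt_of_lt_of_le hl hlx
    -- step 1/2 : 1 - exp(-s x²) ≤ s^γ₃ x^{2γ₃}
    have h12 : 1 - Real.exp (-s * x ^ 2) ≤ s ^ γ₃ * x ^ (2 * γ₃) := by
      have h1 : 1 - Real.exp (-(s * x ^ 2)) ≤ (s * x ^ 2) ^ γ₃ :=
        one_sub_exp_le_rpow hγ₃ hγ₃' (by positivity)
      rw [neg_mul]
      calc 1 - Real.exp (-(s * x ^ 2)) ≤ (s * x ^ 2) ^ γ₃ := h1
        _ = s ^ γ₃ * x ^ (2 * γ₃) := by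
            rw [Real.mul_rpow hs.le (sq_nonneg x)]
            congr 1
            rw [← Real.rpow_natCast x 2, ← Real.rpow_mul hx0.le]
            norm_num
    have hxsplit : x ^ γ₁ * x ^ (2 * γ₃) = x ^ γ₂ * x ^ α := by
      rw [← Real.rpow_add hx0, ← Real.rpow_add hx0]
      congr 1
      rw [hα]; ring
    have hexpsplit : Real.exp (-t * x ^ 2) = Real.exp (-(t * x ^ 2 / 2)) * Real.exp (-(t * x ^ 2 / 2)) := by
      rw [← Real.exp_add]; congr 1; ring
    -- step 5
    have h5 : Real.exp (-(t * x ^ 2 / 2)) ≤ Real.exp (-l ^ 2 * t / 2) := by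
      rw [Real.exp_le_exp]
      nlinarith [mul_le_mul_of_nonneg_left (mul_le_mul hlx hlx hl.le hx0.le) ht.le]
    -- step 6
    have h6 : x ^ α * Real.exp (-(t * x ^ 2 / 2)) ≤ K * t ^ (-α / 2) := by
      set y : ℝ := x * Real.sqrt t with hy
      have hy0 : 0 ≤ y := by positivity
      have hysq : y ^ 2 / 2 = t * x ^ 2 / 2 := by
        rw [hy, mul_pow, Real.sq_sqrt ht.le]; ring
      have hyk := hK y hy0
      rw [hysq] at hyk
      have hyrpow : y ^ α = x ^ α * Real.sqrt t ^ α := Real.mul_rpow hx0.le (Real.sqrt_nonneg t)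
      rw [hyrpow] at hyk
      have hst : (0:ℝ) < Real.sqrt t := Real.sqrt_pos.mpr ht
      have hstα : (0:ℝ) < Real.sqrt t ^ α := Real.rpow_pos_of_pos hst α
      have hinv : Real.sqrt t ^ (-α) = t ^ (-α / 2) := by
        rw [Real.sqrt_eq_rpow, ← Real.rpow_mul ht.le]
        congr 1; ring
      have hmulinv : Real.sqrt t ^ α * Real.sqrt t ^ (-α) = 1 := by
        rw [← Real.rpow_add hst]; simp
      calc x ^ α * Real.exp (-(t * x ^ 2 / 2))
          = (x ^ α * Real.sqrt t ^ α * Real.exp (-(t * x ^ 2 / 2))) * Real.sqrt t ^ (-α) := by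
            rw [show x ^ α * Real.sqrt t ^ α * Real.exp (-(t * x ^ 2 / 2)) * Real.sqrt t ^ (-α)
              = (x ^ α * Real.exp (-(t * x ^ 2 / 2))) * (Real.sqrt t ^ α * Real.sqrt t ^ (-α)) by ring,
              hmulinv, mul_one]
        _ ≤ K * Real.sqrt t ^ (-α) := by
            apply mul_le_mul_of_nonneg_right hyk (Real.rpow_nonneg hst.le _)
        _ = K * t ^ (-α / 2) := by rw [hinv]
    -- combine
    calc (x ^ γ₁ * Real.exp (-t * x ^ 2)) * (1 - Real.exp (-s * x ^ 2))
        ≤ (x ^ γ₁ * Real.exp (-t * x ^ 2)) * (s ^ γ₃ * x ^ (2 * γ₃)) := by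
          apply mul_le_mul_of_nonneg_left h12 (by positivity)
      _ = (x ^ γ₂ * s ^ γ₃) * ((x ^ α * Real.exp (-(t * x ^ 2 / 2))) * Real.exp (-(t * x ^ 2 / 2))) := by
          rw [hexpsplit]
          linear_combination (Real.exp (-(t * x ^ 2 / 2)) * Real.exp (-(t * x ^ 2 / 2)) * s ^ γ₃) * hxsplit
      _ ≤ (x ^ γ₂ * s ^ γ₃) * ((K * t ^ (-α / 2)) * Real.exp (-l ^ 2 * t / 2)) := by
          apply mul_le_mul_of_nonneg_left ?_ (by positivity)
          apply mul_le_mul h6 h5 (Real.exp_pos _).le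
          positivity
      _ = K * (t ^ (-α / 2) * s ^ γ₃ * Real.exp (-l ^ 2 * t / 2) * x ^ γ₂) := by ring

/-- Discrete smoothing estimate for `(-A_N)^{γ₁} e^{-A_N² t}(I - e^{-A_N² s})`
(Lemma 4.1, inequality (4.5)); `(-A_N)^γ` is the spectral power of the symmetric positive
semidefinite matrix `-A_N` (with `0⁰ = 1`) and `exp` is the matrix exponential. -/
theorem stmt6 (γ₁ γ₂ γ₃ : ℝ) (hγ₁ : 0 ≤ γ₁) (hγ₂ : 0 ≤ γ₂) (hγ₃ : 0 ≤ γ₃) (hγ₃' : γ₃ < 1)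
    (hsum : 0 < γ₁ - γ₂ + 2 * γ₃) :
    ∃ C : ℝ, 0 < C ∧ ∀ N : ℕ, 2 ≤ N → ∀ hA : (-(matA N)).IsHermitian,
      ∀ s t : ℝ, 0 < s → 0 < t → ∀ u : Fin N → ℝ,
      lN2norm N (((hA.cfc fun x : ℝ => x ^ γ₁) * NormedSpace.exp ((-t) • (matA N ^ 2))
          * ((1 : Matrix (Fin N) (Fin N) ℝ) - NormedSpace.exp ((-s) • (matA N ^ 2)))).mulVec u)
        ≤ C * (t ^ (-(γ₁ - γ₂ + 2 * γ₃) / 2) * s ^ γ₃ * Real.exp (-(lamN N 1) ^ 2 * t / 2)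
              * lN2norm N ((hA.cfc fun x : ℝ => x ^ γ₂).mulVec u)
            + gfun γ₁ * |(1 / (N : ℝ)) * ∑ i, u i * Real.sqrt (1 / Real.pi)|) := by
  obtain ⟨C₀, hC₀1, hC₀⟩ := scalar_bound hγ₁ hγ₂ hγ₃ hγ₃'.le hsum
  refine ⟨C₀, lt_of_lt_of_le one_pos hC₀1, ?_⟩
  intro N hN hA s t hs ht u
  set U : Matrix (Fin N) (Fin N) ℝ :=
    (Matrix.IsHermitian.eigenvectorUnitary hA : Matrix (Fin N) (Fin N) ℝ) with hU
  set μ : Fin N → ℝ := hA.eigenvalues with hμ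
  have h1 : star U * U = 1 := by
    rw [hU]; exact Unitary.coe_star_mul_self _
  have h2 : U * star U = 1 := by
    rw [hU]; exact Unitary.coe_mul_star_self _
  -- cfc as triple product
  have hcfc : ∀ f : ℝ → ℝ, hA.cfc f = U * Matrix.diagonal (fun i => f (μ i)) * star U := by
    intro f
    rw [Matrix.IsHermitian.cfc]
    congr 1
  -- triple product multiplication
  have htri : ∀ d e : Fin N → ℝ,
      (U * Matrix.diagonal d * star U) * (U * Matrix.diagonal e * star U)
        = U * Matrix.diagonal (fun i => d i * e i) * star U := by
    intro d e
    calc (U * Matrix.diagonal d * star U) * (U * Matrix.diagonal e * star U)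
        = U * Matrix.diagonal d * (star U * U) * (Matrix.diagonal e * star U) := by
          simp only [Matrix.mul_assoc]
      _ = U * (Matrix.diagonal d * Matrix.diagonal e) * star U := by
          rw [h1, Matrix.mul_one]; simp only [Matrix.mul_assoc]
      _ = U * Matrix.diagonal (fun i => d i * e i) * star U := by
          rw [Matrix.diagonal_mul_diagonal]
  -- spectral theorem
  have hspec : -(matA N) = U * Matrix.diagonal μ * star U := by
    have h := hA.spectral_theorem
    rw [RCLike.ofReal_real_eq_id] at h
    simpa using h
  have hBsq : matA N ^ 2 = U * Matrix.diagonal (fun i => μ i ^ 2) * star U := by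
    calc matA N ^ 2 = (-(matA N)) * (-(matA N)) := by rw [neg_mul_neg, ← sq]
      _ = U * Matrix.diagonal (fun i => μ i * μ i) * star U := by rw [hspec, htri]
      _ = _ := by simp only [← sq]
  -- exponential
  have hexp : ∀ r : ℝ, NormedSpace.exp ((-r) • (matA N ^ 2))
      = U * Matrix.diagonal (fun i => Real.exp (-r * μ i ^ 2)) * star U := by
    intro r
    have hsm : (-r) • (matA N ^ 2) = U * Matrix.diagonal (fun i => -r * μ i ^ 2) * star U := by
      rw [hBsq]
      rw [show Matrix.diagonal (fun i => -r * μ i ^ 2) = (-r) • Matrix.diagonal (fun i => μ i ^ 2) by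
        rw [← Matrix.diagonal_smul]; congr 1]
      simp [Matrix.smul_mul, Matrix.mul_smul]
    have hUnit : IsUnit U := ⟨⟨U, star U, h2, h1⟩, rfl⟩
    have hUinv : U⁻¹ = star U := Matrix.inv_eq_left_inv h1
    rw [hsm, ← hUinv, Matrix.exp_conj U _ hUnit, Matrix.exp_diagonal, hUinv]
    have hfe : NormedSpace.exp (fun i : Fin N => -r * μ i ^ 2)
        = fun i : Fin N => Real.exp (-r * μ i ^ 2) := by
      funext i
      rw [Pi.coe_exp, ← Real.exp_eq_exp_ℝ]
    rw [hfe]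
  -- the 1
  have hone : (1 : Matrix (Fin N) (Fin N) ℝ) = U * Matrix.diagonal (fun _ => (1:ℝ)) * star U := by
    rw [show Matrix.diagonal (fun _ : Fin N => (1:ℝ)) = 1 from Matrix.diagonal_one,
      Matrix.mul_one, h2]
  -- the product matrix
  set F : Fin N → ℝ := fun i => (μ i ^ γ₁ * Real.exp (-t * μ i ^ 2))
    * (1 - Real.exp (-s * μ i ^ 2)) with hF
  have hP : (hA.cfc fun x : ℝ => x ^ γ₁) * NormedSpace.exp ((-t) • (matA N ^ 2))
      * ((1 : Matrix (Fin N) (Fin N) ℝ) - NormedSpace.exp ((-s) • (matA N ^ 2)))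
      = U * Matrix.diagonal F * star U := by
    rw [hcfc, hexp t, hexp s, htri]
    have hsub : (1 : Matrix (Fin N) (Fin N) ℝ) - U * Matrix.diagonal (fun i => Real.exp (-s * μ i ^ 2)) * star U
        = U * Matrix.diagonal (fun i => 1 - Real.exp (-s * μ i ^ 2)) * star U := by
      rw [hone]
      rw [← Matrix.sub_mul, ← Matrix.mul_sub, ← Matrix.diagonal_sub]
    rw [hsub, htri]
  -- quadratic form via unitary invariance
  set w : Fin N → ℝ := (star U) *ᵥ u with hw
  have hquad : ∀ d : Fin N → ℝ,
      ∑ i, (((U * Matrix.diagonal d * star U) *ᵥ u) i) ^ 2 = ∑ i, (d i) ^ 2 * (w i) ^ 2 := by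
    intro d
    have hmv : (U * Matrix.diagonal d * star U) *ᵥ u = U *ᵥ (Matrix.diagonal d *ᵥ w) := by
      rw [Matrix.mulVec_mulVec, Matrix.mulVec_mulVec]
    rw [hmv]
    have hUt : Uᵀ * U = 1 := by
      rw [← Matrix.conjTranspose_eq_transpose_of_trivial, ← Matrix.star_eq_conjTranspose, h1]
    have horth : ∀ z : Fin N → ℝ, ∑ i, ((U *ᵥ z) i) ^ 2 = ∑ i, (z i) ^ 2 := by
      intro z
      have hd : (U *ᵥ z) ⬝ᵥ (U *ᵥ z) = z ⬝ᵥ z := by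
        rw [Matrix.dotProduct_mulVec]
        have hz : (U *ᵥ z) ᵥ* U = z := by
          calc (U *ᵥ z) ᵥ* U = (z ᵥ* Uᵀ) ᵥ* U := by rw [Matrix.vecMul_transpose]
            _ = z ᵥ* (Uᵀ * U) := by rw [Matrix.vecMul_vecMul]
            _ = z := by rw [hUt, Matrix.vecMul_one]
        rw [hz]
      simpa [dotProduct, pow_two] using hd
    rw [horth]
    apply Finset.sum_congr rfl
    intro i _
    rw [Matrix.mulVec_diagonal]
    ring
  -- eigenvalue location
  have hloc : ∀ i, μ i = 0 ∨ lamN N 1 ≤ μ i := by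
    intro i
    obtain ⟨j, hj⟩ := eigenvalue_mem hN hA i
    rcases Nat.eq_zero_or_pos (j:ℕ) with h0 | hpos
    · left
      show hA.eigenvalues i = 0
      rw [hj, h0, lamN_zero]
    · right
      show lamN N 1 ≤ hA.eigenvalues i
      rw [hj]
      rcases eq_or_lt_of_le (show 1 ≤ (j:ℕ) from hpos) with h1 | h1
      · rw [← h1]
      · exact (lamN_strictMono hN h1 j.isLt).le
  have hl1 : 0 < lamN N 1 := lamN_one_pos hN
  have hμ0 : ∀ i, 0 ≤ μ i := by
    intro i
    rcases hloc i with h | h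
    · rw [h]
    · linarith
  -- pointwise scalar bound
  set T1 : ℝ := t ^ (-(γ₁ - γ₂ + 2 * γ₃) / 2) * s ^ γ₃ * Real.exp (-(lamN N 1) ^ 2 * t / 2)
    with hT1
  have hT1pos : 0 < T1 := by
    rw [hT1]
    have := Real.rpow_pos_of_pos ht (-(γ₁ - γ₂ + 2 * γ₃) / 2)
    have := Real.rpow_pos_of_pos hs γ₃
    positivity
  have hc0 : 0 ≤ C₀ * T1 := by positivity
  have hFnn : ∀ i, 0 ≤ F i := by
    intro i
    apply mul_nonneg (mul_nonneg (Real.rpow_nonneg (hμ0 i) _) (Real.exp_pos _).le)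
    have : Real.exp (-s * μ i ^ 2) ≤ 1 := by
      rw [Real.exp_le_one_iff]
      nlinarith [sq_nonneg (μ i), hs.le]
    linarith
  have hpt : ∀ i, F i ≤ (C₀ * T1) * μ i ^ γ₂ := by
    intro i
    have := hC₀ (lamN N 1) (μ i) s t hl1 (hloc i) hs ht
    calc F i ≤ C₀ * (t ^ (-(γ₁ - γ₂ + 2 * γ₃) / 2) * s ^ γ₃
          * Real.exp (-(lamN N 1) ^ 2 * t / 2) * μ i ^ γ₂) := this
      _ = (C₀ * T1) * μ i ^ γ₂ := by rw [hT1]; ring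
  -- sum comparison
  have hsumle : ∑ i, (F i) ^ 2 * (w i) ^ 2
      ≤ (C₀ * T1) ^ 2 * ∑ i, ((fun i => μ i ^ γ₂) i) ^ 2 * (w i) ^ 2 := by
    rw [Finset.mul_sum]
    apply Finset.sum_le_sum
    intro i _
    have h1' : (F i) ^ 2 ≤ ((C₀ * T1) * μ i ^ γ₂) ^ 2 :=
      pow_le_pow_left₀ (hFnn i) (hpt i) 2
    calc (F i) ^ 2 * (w i) ^ 2 ≤ ((C₀ * T1) * μ i ^ γ₂) ^ 2 * (w i) ^ 2 :=
          mul_le_mul_of_nonneg_right h1' (sq_nonneg _)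
      _ = (C₀ * T1) ^ 2 * ((μ i ^ γ₂) ^ 2 * (w i) ^ 2) := by ring
  -- conclude
  have hNnn : (0:ℝ) ≤ 1 / (N:ℝ) := by positivity
  have hQ : hA.cfc (fun x : ℝ => x ^ γ₂) = U * Matrix.diagonal (fun i => μ i ^ γ₂) * star U :=
    hcfc _
  have hLHS : lN2norm N (((hA.cfc fun x : ℝ => x ^ γ₁) * NormedSpace.exp ((-t) • (matA N ^ 2))
      * ((1 : Matrix (Fin N) (Fin N) ℝ) - NormedSpace.exp ((-s) • (matA N ^ 2)))).mulVec u)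
      ≤ (C₀ * T1) * lN2norm N ((hA.cfc fun x : ℝ => x ^ γ₂).mulVec u) := by
    rw [lN2norm, lN2norm, hP, hQ]
    show Real.sqrt ((1/(N:ℝ)) * ∑ i, (((U * Matrix.diagonal F * star U) *ᵥ u) i) ^ 2) ≤ _
    rw [hquad F]
    have hstep : (1/(N:ℝ)) * ∑ i, (F i) ^ 2 * (w i) ^ 2
        ≤ (C₀ * T1) ^ 2 * ((1/(N:ℝ)) * ∑ i, ((μ i ^ γ₂) ^ 2 * (w i) ^ 2)) := by
      calc (1/(N:ℝ)) * ∑ i, (F i) ^ 2 * (w i) ^ 2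
          ≤ (1/(N:ℝ)) * ((C₀ * T1) ^ 2 * ∑ i, ((μ i ^ γ₂) ^ 2 * (w i) ^ 2)) :=
            mul_le_mul_of_nonneg_left hsumle hNnn
        _ = (C₀ * T1) ^ 2 * ((1/(N:ℝ)) * ∑ i, ((μ i ^ γ₂) ^ 2 * (w i) ^ 2)) := by ring
    calc Real.sqrt ((1/(N:ℝ)) * ∑ i, (F i) ^ 2 * (w i) ^ 2)
        ≤ Real.sqrt ((C₀ * T1) ^ 2 * ((1/(N:ℝ)) * ∑ i, ((μ i ^ γ₂) ^ 2 * (w i) ^ 2))) :=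
          Real.sqrt_le_sqrt hstep
      _ = (C₀ * T1) * Real.sqrt ((1/(N:ℝ)) * ∑ i, ((μ i ^ γ₂) ^ 2 * (w i) ^ 2)) := by
          rw [Real.sqrt_mul (sq_nonneg _), Real.sqrt_sq hc0]
      _ = (C₀ * T1) * Real.sqrt ((1/(N:ℝ)) * ∑ i, (((U * Matrix.diagonal (fun i => μ i ^ γ₂) * star U) *ᵥ u) i) ^ 2) := by
          rw [hquad (fun i => μ i ^ γ₂)]
  have hG : 0 ≤ C₀ * (gfun γ₁ * |(1 / (N : ℝ)) * ∑ i, u i * Real.sqrt (1 / Real.pi)|) := by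
    apply mul_nonneg (by linarith)
    apply mul_nonneg _ (abs_nonneg _)
    rw [gfun]
    split_ifs <;> norm_num
  calc lN2norm N (((hA.cfc fun x : ℝ => x ^ γ₁) * NormedSpace.exp ((-t) • (matA N ^ 2))
      * ((1 : Matrix (Fin N) (Fin N) ℝ) - NormedSpace.exp ((-s) • (matA N ^ 2)))).mulVec u)
      ≤ (C₀ * T1) * lN2norm N ((hA.cfc fun x : ℝ => x ^ γ₂).mulVec u) := hLHS
    _ ≤ C₀ * (T1 * lN2norm N ((hA.cfc fun x : ℝ => x ^ γ₂).mulVec u))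
        + C₀ * (gfun γ₁ * |(1 / (N : ℝ)) * ∑ i, u i * Real.sqrt (1 / Real.pi)|) := by
        have hr : (C₀ * T1) * lN2norm N ((hA.cfc fun x : ℝ => x ^ γ₂).mulVec u)
            = C₀ * (T1 * lN2norm N ((hA.cfc fun x : ℝ => x ^ γ₂).mulVec u)) := by ring
        linarith [hG, hr]
    _ = C₀ * (T1 * lN2norm N ((hA.cfc fun x : ℝ => x ^ γ₂).mulVec u)
        + gfun γ₁ * |(1 / (N : ℝ)) * ∑ i, u i * Real.sqrt (1 / Real.pi)|) := by ring
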